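/- Let (C,χ) be a Hopf heap and x ∈ C a group-like element. Then C with unit x, multiplication ab = [a,x,b], and antipode S(a) = [x,a,x] is a Hopf algebra H_x(C). -/

import Mathlib

/-! Since `x` is group-like, the heap axioms `Σ[c₁,c₂,a] = ε(c)a = Σ[a,c₁,c₂]` at `c = x` read
`[x,x,a] = a = [a,x,x]`, so `x` is a two-sided unit. Every other Hopf algebra axiom is a heap
axiom with `x` in the middle slot: associativity is `[[a,x,b],x,c] = [a,x,[b,x,c]]`,
multiplicativity of `Δ` and `ε` is the coalgebra-map property of `χ` with `Δ x = x ⊗ x`, and the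
antipode identities reduce, via associativity and the unit law, to `Σ[x,a₁,a₂] = ε(a)x` and
`Σ[a₁,a₂,x] = ε(a)x`. -/

open Coalgebra TensorProduct

universe u v w

/-- The old (December 2024) `Coalgebra.Repr`, which bundled its index type `ι`. -/
structure Coalgebra.BundledRepr (R : Type u) {A : Type v}
    [CommSemiring R] [AddCommMonoid A] [Module R A] [CoalgebraStruct R A] (a : A) where
  {ι : Type w}
  (index : Finset ι)
  (left : ι → A)
  (right : ι → A)
  (eq : ∑ i ∈ index, left i ⊗ₜ[R] right i = CoalgebraStruct.comul a)

/-- A Hopf heap: a coalgebra `C` together with a coalgebra map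
`χ : C ⊗ C^co ⊗ C → C` (given here as a trilinear map) satisfying the heap axioms. -/
structure HopfHeap (F : Type u) (C : Type v) [Field F] [AddCommGroup C] [Module F C]
    [Coalgebra F C] where
  χ : C →ₗ[F] C →ₗ[F] C →ₗ[F] C
  counit_χ : ∀ a b c : C,
    counit (R := F) (χ a b c) = counit (R := F) a * counit (R := F) b * counit (R := F) c
  comul_χ : ∀ (a b c : C) (ra : Coalgebra.BundledRepr.{u, v, v} F a) (rb : Coalgebra.BundledRepr.{u, v, v} F b)
      (rc : Coalgebra.BundledRepr.{u, v, v} F c),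
    comul (R := F) (χ a b c) =
      ∑ i ∈ ra.index, ∑ j ∈ rb.index, ∑ k ∈ rc.index,
        χ (ra.left i) (rb.right j) (rc.left k) ⊗ₜ[F] χ (ra.right i) (rb.left j) (rc.right k)
  assoc : ∀ a b c d e : C, χ (χ a b c) d e = χ a b (χ c d e)
  heap_left : ∀ (c a : C) (rc : Coalgebra.BundledRepr.{u, v, v} F c),
    ∑ i ∈ rc.index, χ (rc.left i) (rc.right i) a = counit (R := F) c • a
  heap_right : ∀ (c a : C) (rc : Coalgebra.BundledRepr.{u, v, v} F c),
    ∑ i ∈ rc.index, χ a (rc.left i) (rc.right i) = counit (R := F) c • a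

variable {F : Type u} {C : Type v} [Field F] [AddCommGroup C] [Module F C] [Coalgebra F C]

/-- `θ` is a Grunspan map for the Hopf heap `hh`: a coalgebra endomorphism satisfying
`[[a,b,θ c],d,e] = [a,[d,c,b],e]`. -/
def HopfHeap.IsGrunspan (hh : HopfHeap F C) (θ : C →ₗ[F] C) : Prop :=
  (∀ c : C, counit (R := F) (θ c) = counit (R := F) c) ∧
  (∀ (c : C) (rc : Coalgebra.BundledRepr.{u, v, v} F c),
    comul (R := F) (θ c) = ∑ i ∈ rc.index, θ (rc.left i) ⊗ₜ[F] θ (rc.right i)) ∧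
  (∀ a b c d e : C, hh.χ (hh.χ a b (θ c)) d e = hh.χ a (hh.χ d c b) e)

/-- The right `(a,b)`-translation `τ_a^b : c ↦ [c,a,b]`. -/
def HopfHeap.tau (hh : HopfHeap F C) (a b : C) : C →ₗ[F] C where
  toFun c := hh.χ c a b
  map_add' x y := by simp
  map_smul' r x := by simp

def Coalgebra.BundledRepr.ofIsGroupLikeElem {x : C} (hx : IsGroupLikeElem F x) :
    Coalgebra.BundledRepr.{u, v, v} F x where
  index := {PUnit.unit}
  left _ := x
  right _ := x
  eq := by simp [hx.comul_eq_tmul_self]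

namespace HopfHeap

variable (hh : HopfHeap F C) {x : C} (hx : IsGroupLikeElem F x)
include hx

theorem χ_self_self_left (a : C) : hh.χ x x a = a := by
  simpa [Coalgebra.BundledRepr.ofIsGroupLikeElem, hx.counit_eq_one] using
    hh.heap_left x a (.ofIsGroupLikeElem hx)

theorem χ_self_self_right (a : C) : hh.χ a x x = a := by
  simpa [Coalgebra.BundledRepr.ofIsGroupLikeElem, hx.counit_eq_one] using
    hh.heap_right x a (.ofIsGroupLikeElem hx)

theorem counit_χ_isGroupLikeElem (a b : C) :
    counit (R := F) (hh.χ a x b) = counit (R := F) a * counit (R := F) b := by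
  rw [hh.counit_χ, hx.counit_eq_one, mul_one]

theorem comul_χ_isGroupLikeElem (a b : C) (ra : Coalgebra.BundledRepr.{u, v, v} F a)
    (rb : Coalgebra.BundledRepr.{u, v, v} F b) :
    comul (R := F) (hh.χ a x b) = ∑ i ∈ ra.index, ∑ j ∈ rb.index,
      hh.χ (ra.left i) x (rb.left j) ⊗ₜ[F] hh.χ (ra.right i) x (rb.right j) := by
  simpa [Coalgebra.BundledRepr.ofIsGroupLikeElem] using
    hh.comul_χ a x b ra (.ofIsGroupLikeElem hx) rb

theorem sum_χ_antipode_mul (a : C) (ra : Coalgebra.BundledRepr.{u, v, v} F a) :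
    ∑ i ∈ ra.index, hh.χ (hh.χ x (ra.left i) x) x (ra.right i) = counit (R := F) a • x := by
  simp_rw [hh.assoc, hh.χ_self_self_left hx]
  exact hh.heap_right a x ra

theorem sum_χ_mul_antipode (a : C) (ra : Coalgebra.BundledRepr.{u, v, v} F a) :
    ∑ i ∈ ra.index, hh.χ (ra.left i) x (hh.χ x (ra.right i) x) = counit (R := F) a • x := by
  simp_rw [← hh.assoc, hh.χ_self_self_right hx]
  exact hh.heap_left a x ra

end HopfHeap

/-- For a Hopf heap `(C,χ)` and a group-like `x ∈ C`, the coalgebra `C` with unit `x`,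
multiplication `ab = [a,x,b]` and antipode `S(a) = [x,a,x]` is a Hopf algebra `H_x(C)`:
all the Hopf algebra axioms hold for these operations. -/
theorem hopfHeap_grouplike_hopfAlgebra (hh : HopfHeap F C) (x : C)
    (hx_comul : comul (R := F) x = x ⊗ₜ[F] x) (hx_counit : counit (R := F) x = 1) :
    -- associativity of `ab = [a,x,b]`
    (∀ a b c : C, hh.χ (hh.χ a x b) x c = hh.χ a x (hh.χ b x c)) ∧
    -- `x` is a two-sided unit
    (∀ a : C, hh.χ x x a = a) ∧ (∀ a : C, hh.χ a x x = a) ∧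
    -- the comultiplication is an algebra map
    (∀ (a b : C) (ra : Coalgebra.BundledRepr.{u, v, v} F a) (rb : Coalgebra.BundledRepr.{u, v, v} F b),
      comul (R := F) (hh.χ a x b) = ∑ i ∈ ra.index, ∑ j ∈ rb.index,
        hh.χ (ra.left i) x (rb.left j) ⊗ₜ[F] hh.χ (ra.right i) x (rb.right j)) ∧
    -- the counit is an algebra map
    (∀ a b : C, counit (R := F) (hh.χ a x b) = counit (R := F) a * counit (R := F) b) ∧
    -- the antipode axioms for `S(a) = [x,a,x]`
    (∀ (a : C) (ra : Coalgebra.BundledRepr.{u, v, v} F a),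
      ∑ i ∈ ra.index, hh.χ (hh.χ x (ra.left i) x) x (ra.right i) = counit (R := F) a • x) ∧
    (∀ (a : C) (ra : Coalgebra.BundledRepr.{u, v, v} F a),
      ∑ i ∈ ra.index, hh.χ (ra.left i) x (hh.χ x (ra.right i) x) = counit (R := F) a • x) := by
  have hx : IsGroupLikeElem F x := ⟨hx_counit, hx_comul⟩
  exact ⟨fun a b c => hh.assoc a x b x c, hh.χ_self_self_left hx, hh.χ_self_self_right hx,
    hh.comul_χ_isGroupLikeElem hx, hh.counit_χ_isGroupLikeElem hx,
    hh.sum_χ_antipode_mul hx, hh.sum_χ_mul_antipode hx⟩
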